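/- Let C be an [n,k]_q linear code with 1 ≤ s ≤ k-1 and suppose D_s(C) < d_{s+1}(C). Then C is an s-minimal code, meaning every s-dimensional subcode of C is s-minimal. -/
import Mathlib

open Module

variable {F : Type*} [Field F] [Fintype F]

/-- The support of a subspace `U ⊆ F^ι`: coordinates where some vector of `U` is nonzero. -/
def csupp {ι : Type*} (U : Submodule F (ι → F)) : Set ι :=
  {j | ∃ x ∈ U, x j ≠ 0}

/-- The support weight of a subspace of `F^ι`. -/
noncomputable def wt {ι : Type*} (U : Submodule F (ι → F)) : ℕ := (csupp U).ncard

/-- `U` is an `s`-minimal subcode of `C`. -/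
def IsMinimalSubcode {ι : Type*} (C U : Submodule F (ι → F)) (s : ℕ) : Prop :=
  U ≤ C ∧ Module.finrank F U = s ∧
    ∀ V : Submodule F (ι → F), V ≤ C → Module.finrank F V = s →
      csupp V ⊆ csupp U → V = U

/-- `C` is an `s`-minimal code. -/
def SMinimal {ι : Type*} (C : Submodule F (ι → F)) (s : ℕ) : Prop :=
  ∀ U : Submodule F (ι → F), U ≤ C → Module.finrank F U = s → IsMinimalSubcode C U s

/-- The `s`-th generalized Hamming weight of `C`. -/
noncomputable def dGHW {ι : Type*} (C : Submodule F (ι → F)) (s : ℕ) : ℕ :=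
  sInf {w | ∃ U : Submodule F (ι → F), U ≤ C ∧ Module.finrank F U = s ∧ wt U = w}

/-- The `s`-th maximum support weight of `C`. -/
noncomputable def DGHW {ι : Type*} (C : Submodule F (ι → F)) (s : ℕ) : ℕ :=
  sSup {w | ∃ U : Submodule F (ι → F), U ≤ C ∧ Module.finrank F U = s ∧ wt U = w}

lemma csupp_mono {ι : Type*} {U V : Submodule F (ι → F)} (h : U ≤ V) :
    csupp U ⊆ csupp V := fun j ⟨x, hx, hxj⟩ => ⟨x, h hx, hxj⟩

lemma csupp_sup {ι : Type*} (U V : Submodule F (ι → F)) :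
    csupp (U ⊔ V) ⊆ csupp U ∪ csupp V := by
  rintro j ⟨x, hx, hxj⟩
  rcases Submodule.mem_sup.mp hx with ⟨u, hu, v, hv, rfl⟩
  by_cases h : u j = 0
  · exact Or.inr ⟨v, hv, by simpa [h] using hxj⟩
  · exact Or.inl ⟨u, hu, h⟩

/-- if `D_s(C) < d_{s+1}(C)` then `C` is an `s`-minimal code. -/
theorem sMinimal_of_DGHW_lt_dGHW (n k s : ℕ) (hs1 : 1 ≤ s) (hs2 : s ≤ k - 1)
    (C : Submodule F (Fin n → F)) (hC : Module.finrank F C = k)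
    (h : DGHW C s < dGHW C (s + 1)) :
    SMinimal C s := by
  intro U hUC hU
  refine ⟨hUC, hU, ?_⟩
  intro V hVC hV hsupp
  by_contra hne
  -- pick v ∈ V, v ∉ U
  have hVle : ¬ V ≤ U := by
    intro hle
    exact hne (Submodule.eq_of_le_of_finrank_le hle (by rw [hU, hV]))
  obtain ⟨v, hvV, hvU⟩ := SetLike.not_le_iff_exists.mp hVle
  have hv0 : v ≠ 0 := fun h0 => hvU (h0 ▸ U.zero_mem)
  set W : Submodule F (Fin n → F) := U ⊔ F ∙ v with hWdef
  have hUltW : U < W := lt_of_le_of_ne le_sup_left (by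
    intro hEq
    exact hvU (hEq ▸ le_sup_right (a := U) (Submodule.mem_span_singleton_self v)))
  have hWrank : finrank F W = s + 1 := by
    have h1 : finrank F W ≤ s + 1 := by
      calc finrank F W ≤ finrank F U + finrank F (F ∙ v) :=
            Submodule.finrank_add_le_finrank_add_finrank U (F ∙ v)
        _ = s + 1 := by rw [hU, finrank_span_singleton hv0]
    have h2 : s < finrank F W := hU ▸ Submodule.finrank_lt_finrank_of_lt hUltW
    omega
  have hWC : W ≤ C := sup_le hUC
    ((Submodule.span_singleton_le_iff_mem v C).mpr (hVC hvV))
  have hWsupp : csupp W ⊆ csupp U := by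
    intro j hj
    rcases csupp_sup U (F ∙ v) hj with h | h
    · exact h
    · rcases h with ⟨x, hx, hxj⟩
      exact hsupp ⟨x, Submodule.span_le.mpr (by simpa using hvV) hx, hxj⟩
  -- wt W ≥ dGHW C (s+1)
  have h1 : dGHW C (s + 1) ≤ wt W := Nat.sInf_le ⟨W, hWC, hWrank, rfl⟩
  -- wt W ≤ wt U
  have h2 : wt W ≤ wt U := Set.ncard_le_ncard hWsupp (Set.toFinite _)
  -- wt U ≤ DGHW C s
  have h3 : wt U ≤ DGHW C s := by
    apply le_csSup
    · refine ⟨n, ?_⟩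
      rintro w ⟨U', _, _, rfl⟩
      calc wt U' ≤ (Set.univ : Set (Fin n)).ncard := Set.ncard_le_ncard (Set.subset_univ _)
        _ = n := by rw [Set.ncard_univ, Nat.card_eq_fintype_card, Fintype.card_fin]
    · exact ⟨U, hUC, hU, rfl⟩
  omega
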